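/- For discrete random variables Y and T, the mutual information I(Y;T) is lower-bounded by the Barber–Agakov bound: I(Y;T) ≥ E_{p(y,t)}[log q(y|t)] + H(Y) for any conditional probability distribution (auxiliary decoder) q(y|t), with equality when q(y|t) = p(y|t). -/

import Mathlib

open scoped BigOperators

/-- A probability distribution on a finite sample space. -/
structure FinProb (Ω : Type) [Fintype Ω] where
  p : Ω → ℝ
  nonneg : ∀ ω, 0 ≤ p ω
  sum_one : ∑ ω, p ω = 1

/-- Probability that a discrete random variable `X` takes the value `a`. -/
noncomputable def probOf {Ω α : Type} [Fintype Ω] [Fintype α] [DecidableEq α]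
    (μ : FinProb Ω) (X : Ω → α) (a : α) : ℝ :=
  ∑ ω, if X ω = a then μ.p ω else 0

/-- Shannon entropy of a discrete random variable. -/
noncomputable def entropy {Ω α : Type} [Fintype Ω] [Fintype α] [DecidableEq α]
    (μ : FinProb Ω) (X : Ω → α) : ℝ :=
  ∑ a, Real.negMulLog (probOf μ X a)

/-- Conditional Shannon entropy `H(X|Y) = H(X,Y) - H(Y)`. -/
noncomputable def condEntropy {Ω α β : Type} [Fintype Ω] [Fintype α] [DecidableEq α]
    [Fintype β] [DecidableEq β] (μ : FinProb Ω) (X : Ω → α) (Y : Ω → β) : ℝ :=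
  entropy μ (fun ω => (X ω, Y ω)) - entropy μ Y

/-- Mutual information `I(X;Z) = H(X) + H(Z) - H(X,Z)`. -/
noncomputable def mutualInfo {Ω α β : Type} [Fintype Ω] [Fintype α] [DecidableEq α]
    [Fintype β] [DecidableEq β] (μ : FinProb Ω) (X : Ω → α) (Z : Ω → β) : ℝ :=
  entropy μ X + entropy μ Z - entropy μ (fun ω => (X ω, Z ω))

/-- Conditional mutual information `I(X;Z|Y) = H(X|Y) + H(Z|Y) - H(X,Z|Y)`. -/
noncomputable def condMutualInfo {Ω α β γ : Type} [Fintype Ω] [Fintype α] [DecidableEq α]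
    [Fintype β] [DecidableEq β] [Fintype γ] [DecidableEq γ]
    (μ : FinProb Ω) (X : Ω → α) (Z : Ω → β) (Y : Ω → γ) : ℝ :=
  condEntropy μ X Y + condEntropy μ Z Y - condEntropy μ (fun ω => (X ω, Z ω)) Y

/-- Conditional probability `p(t|x)` of `T = t` given `X = x`. -/
noncomputable def condProb {Ω α β : Type} [Fintype Ω] [Fintype α] [DecidableEq α]
    [Fintype β] [DecidableEq β] (μ : FinProb Ω) (T : Ω → β) (X : Ω → α) (t : β) (x : α) : ℝ :=
  probOf μ (fun ω => (T ω, X ω)) (t, x) / probOf μ X x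

/-- Expected KL divergence `KL(p(t|x₁) ‖ q(t|x₂))` between two channels sharing a
representation space, averaged over the joint law of `(X₁, X₂)`. -/
noncomputable def klChannels {Ω α₁ α₂ γ : Type} [Fintype Ω] [Fintype α₁] [DecidableEq α₁]
    [Fintype α₂] [DecidableEq α₂] [Fintype γ] [DecidableEq γ] (μ : FinProb Ω)
    (T₁ : Ω → γ) (X₁ : Ω → α₁) (T₂ : Ω → γ) (X₂ : Ω → α₂) : ℝ :=
  ∑ x : α₁ × α₂, probOf μ (fun ω => (X₁ ω, X₂ ω)) x *
    ∑ t : γ, condProb μ T₁ X₁ t x.1 *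
      Real.log (condProb μ T₁ X₁ t x.1 / condProb μ T₂ X₂ t x.2)

/-! The gap `I(Y;T) - (E[log q(Y|T)] + H(Y))` is `∑ p(y,t) (log p(y,t) - log (p(t) q(y|t)))`,
a relative entropy between two probability distributions on pairs `(y,t)`, hence nonnegative by
Gibbs' inequality `log x ≤ x - 1`. For `q = p(·|t)` the second distribution is `p(y,t)` itself. -/

open Real

theorem sub_le_mul_log_sub_log {p r : ℝ} (hp : 0 ≤ p) (hpr : p ≠ 0 → 0 < r) (hr : 0 ≤ r) :
    p - r ≤ p * (log p - log r) := by
  rcases hp.eq_or_lt with rfl | hp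
  · simpa using hr
  have hlog := mul_le_mul_of_nonneg_left (log_le_sub_one_of_pos (div_pos (hpr hp.ne') hp)) hp.le
  rw [log_div (hpr hp.ne').ne' hp.ne', mul_sub_one, mul_div_cancel₀ _ hp.ne'] at hlog
  linarith

theorem sum_mul_log_sub_log_nonneg {ι : Type*} [Fintype ι] {p r : ι → ℝ} (hp : ∀ i, 0 ≤ p i)
    (hpr : ∀ i, p i ≠ 0 → 0 < r i) (hr : ∀ i, 0 ≤ r i) (hsum : ∑ i, r i ≤ ∑ i, p i) :
    0 ≤ ∑ i, p i * (log (p i) - log (r i)) :=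
  calc 0 ≤ ∑ i, (p i - r i) := by rw [Finset.sum_sub_distrib]; linarith
    _ ≤ _ := Finset.sum_le_sum fun i _ => sub_le_mul_log_sub_log (hp i) (hpr i) (hr i)

section Discrete

variable {Ω α β : Type} [Fintype Ω] [Fintype α] [DecidableEq α] [Fintype β] [DecidableEq β]
  (μ : FinProb Ω)

theorem probOf_nonneg (X : Ω → α) (a : α) : 0 ≤ probOf μ X a :=
  Finset.sum_nonneg fun ω _ => ite_nonneg (μ.nonneg ω) le_rfl

theorem sum_probOf (X : Ω → α) : ∑ a, probOf μ X a = 1 := by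
  unfold probOf
  rw [Finset.sum_comm]
  simpa using μ.sum_one

theorem sum_probOf_pair_left (X : Ω → α) (Z : Ω → β) (b : β) :
    ∑ a, probOf μ (fun ω => (X ω, Z ω)) (a, b) = probOf μ Z b := by
  unfold probOf
  rw [Finset.sum_comm]
  refine Finset.sum_congr rfl fun ω _ => ?_
  by_cases h : Z ω = b <;> simp [h]

theorem probOf_pair_le_right (X : Ω → α) (Z : Ω → β) (a : α) (b : β) :
    probOf μ (fun ω => (X ω, Z ω)) (a, b) ≤ probOf μ Z b :=
  sum_probOf_pair_left μ X Z b ▸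
    Finset.single_le_sum (fun a' _ => probOf_nonneg μ _ (a', b)) (Finset.mem_univ a)

theorem probOf_right_pos_of_pair_ne_zero {X : Ω → α} {Z : Ω → β} {a : α} {b : β}
    (h : probOf μ (fun ω => (X ω, Z ω)) (a, b) ≠ 0) : 0 < probOf μ Z b :=
  ((probOf_nonneg μ _ _).lt_of_ne' h).trans_le (probOf_pair_le_right μ X Z a b)

theorem probOf_mul_condProb (X : Ω → α) (Z : Ω → β) (a : α) (b : β) :
    probOf μ Z b * condProb μ X Z a b = probOf μ (fun ω => (X ω, Z ω)) (a, b) := by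
  by_cases h : probOf μ (fun ω => (X ω, Z ω)) (a, b) = 0
  · rw [h, condProb, h, zero_div, mul_zero]
  · exact mul_div_cancel₀ _ (probOf_right_pos_of_pair_ne_zero μ h).ne'

theorem entropy_eq_neg_sum_mul_log (X : Ω → α) :
    entropy μ X = -∑ a, probOf μ X a * log (probOf μ X a) := by
  simp [entropy, negMulLog, Finset.sum_neg_distrib]

theorem entropy_eq_neg_sum_pair_mul_log_right (X : Ω → α) (Z : Ω → β) :
    entropy μ Z = -∑ x : α × β, probOf μ (fun ω => (X ω, Z ω)) x * log (probOf μ Z x.2) := by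
  rw [entropy_eq_neg_sum_mul_log, Fintype.sum_prod_type_right]
  simp_rw [← Finset.sum_mul, sum_probOf_pair_left]

noncomputable def barberAgakovBound (Y : Ω → α) (T : Ω → β) (q : α → β → ℝ) : ℝ :=
  (∑ y, ∑ t, probOf μ (fun ω => (Y ω, T ω)) (y, t) * log (q y t)) + entropy μ Y

theorem mutualInfo_sub_barberAgakovBound (Y : Ω → α) (T : Ω → β) (q : α → β → ℝ)
    (hqpos : ∀ y t, probOf μ (fun ω => (Y ω, T ω)) (y, t) ≠ 0 → 0 < q y t) :
    mutualInfo μ Y T - barberAgakovBound μ Y T q =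
      ∑ x : α × β, probOf μ (fun ω => (Y ω, T ω)) x *
        (log (probOf μ (fun ω => (Y ω, T ω)) x) - log (probOf μ T x.2 * q x.1 x.2)) := by
  have hlog_mul : ∀ x : α × β, probOf μ (fun ω => (Y ω, T ω)) x * log (probOf μ T x.2 * q x.1 x.2)
      = probOf μ (fun ω => (Y ω, T ω)) x * log (probOf μ T x.2)
        + probOf μ (fun ω => (Y ω, T ω)) x * log (q x.1 x.2) := by
    rintro ⟨y, t⟩
    by_cases h : probOf μ (fun ω => (Y ω, T ω)) (y, t) = 0
    · simp [h]
    · rw [log_mul (probOf_right_pos_of_pair_ne_zero μ h).ne' (hqpos y t h).ne', mul_add]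
  simp only [mul_sub, hlog_mul, Finset.sum_sub_distrib, Finset.sum_add_distrib]
  rw [mutualInfo, barberAgakovBound, entropy_eq_neg_sum_pair_mul_log_right μ Y T,
    entropy_eq_neg_sum_mul_log μ (fun ω => (Y ω, T ω)), ← Fintype.sum_prod_type']
  ring

end Discrete

/-- Barber–Agakov variational lower bound:
`I(Y;T) ≥ E_{p(y,t)}[log q(y|t)] + H(Y)` for any auxiliary decoder `q(y|t)`,
with equality when `q(y|t) = p(y|t)`. -/
theorem barber_agakov_bound {Ω α β : Type} [Fintype Ω]
    [Fintype α] [DecidableEq α] [Fintype β] [DecidableEq β]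
    (μ : FinProb Ω) (Y : Ω → α) (T : Ω → β)
    (q : α → β → ℝ) (hq0 : ∀ y t, 0 ≤ q y t)
    (hq1 : ∀ t, ∑ y, q y t = 1)
    (hqpos : ∀ y t, probOf μ (fun ω => (Y ω, T ω)) (y, t) ≠ 0 → 0 < q y t) :
    (mutualInfo μ Y T ≥
      (∑ y, ∑ t, probOf μ (fun ω => (Y ω, T ω)) (y, t) * Real.log (q y t)) + entropy μ Y) ∧
    ((∀ y t, probOf μ T t ≠ 0 → q y t = condProb μ Y T y t) →
      mutualInfo μ Y T =
        (∑ y, ∑ t, probOf μ (fun ω => (Y ω, T ω)) (y, t) * Real.log (q y t)) + entropy μ Y) := by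
  have hgap := mutualInfo_sub_barberAgakovBound μ Y T q hqpos
  rw [barberAgakovBound] at hgap
  refine ⟨?_, fun hopt => ?_⟩
  · have hmass :
        ∑ x : α × β, probOf μ T x.2 * q x.1 x.2 = ∑ x, probOf μ (fun ω => (Y ω, T ω)) x := by
      simp [sum_probOf, Fintype.sum_prod_type_right, ← Finset.mul_sum, hq1]
    have hgibbs := sum_mul_log_sub_log_nonneg (p := probOf μ (fun ω => (Y ω, T ω)))
      (r := fun x => probOf μ T x.2 * q x.1 x.2) (probOf_nonneg μ _)
      (fun ⟨y, t⟩ hyt => mul_pos (probOf_right_pos_of_pair_ne_zero μ hyt) (hqpos y t hyt))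
      (fun ⟨y, t⟩ => mul_nonneg (probOf_nonneg μ T t) (hq0 y t)) hmass.le
    linarith
  · have hreference :
        ∀ x : α × β, probOf μ T x.2 * q x.1 x.2 = probOf μ (fun ω => (Y ω, T ω)) x := by
      rintro ⟨y, t⟩
      by_cases ht : probOf μ T t = 0
      · rw [ht, zero_mul, eq_comm]
        by_contra hyt
        exact (probOf_right_pos_of_pair_ne_zero μ hyt).ne' ht
      · rw [hopt y t ht, probOf_mul_condProb]
    simp only [hreference, sub_self, mul_zero, Finset.sum_const_zero] at hgap
    linarith
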